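/- arXiv:1911.10050 — 2 statements merged into one kernel-verified Lean document; each statement's English description precedes it below -/
import Mathlib

section
/- (Lower and upper bounds for a ratio of modified Bessel functions) For σ > 0 and ℓ ≥ 0: √(σ² + ℓ²) + ℓ + 1 ≤ σ K_{ℓ+3/2}(σ)/K_{ℓ+1/2}(σ) < √(σ² + (ℓ+1)²) + ℓ + 1. -/
open Set


lemma L_facts (a x : ℝ) (hx : 0 < x) :
    0 < Real.sqrt (a^2+4*x^2) ∧ Real.sqrt (a^2+4*x^2)^2 = a^2+4*x^2 ∧
      a < Real.sqrt (a^2+4*x^2) := by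
  have h1 : Real.sqrt (a^2+4*x^2)^2 = a^2+4*x^2 := Real.sq_sqrt (by positivity)
  have h0 : 0 ≤ Real.sqrt (a^2+4*x^2) := Real.sqrt_nonneg _
  refine ⟨?_, h1, ?_⟩ <;> nlinarith [sq_nonneg (Real.sqrt (a^2+4*x^2) - a), sq_nonneg x]

lemma L_anti (a : ℝ) (ha : 0 ≤ a) {x y : ℝ} (hx : 0 < x) (hxy : x ≤ y) :
    (a + Real.sqrt (a^2+4*y^2))/(2*y) ≤ (a + Real.sqrt (a^2+4*x^2))/(2*x) := by
  have hy : 0 < y := lt_of_lt_of_le hx hxy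
  obtain ⟨hsx0, hsx, -⟩ := L_facts a x hx
  obtain ⟨hsy0, hsy, -⟩ := L_facts a y hy
  rw [div_le_div_iff₀ (by linarith) (by linarith)]
  have hyx : x^2 ≤ y^2 := pow_le_pow_left₀ hx.le hxy 2
  have h3 : 0 ≤ a^2 * (y^2 - x^2) := mul_nonneg (sq_nonneg a) (by linarith)
  have hsum : 0 < y * Real.sqrt (a^2+4*x^2) + x * Real.sqrt (a^2+4*y^2) := by positivity
  have key : x * Real.sqrt (a^2+4*y^2) ≤ y * Real.sqrt (a^2+4*x^2) := by
    nlinarith [hsx, hsy, hsum, h3]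
  nlinarith

set_option maxHeartbeats 1600000 in
lemma riccati_upper (a x₀ : ℝ) (ha : 0 ≤ a) (hx₀ : 0 < x₀) (f : ℝ → ℝ)
    (hf : ∀ x, x₀ ≤ x → HasDerivAt f (f x^2 - (a/x)*f x - 1) x)
    (hfpos : ∀ x, x₀ ≤ x → 0 < f x) :
    f x₀ ≤ (a + Real.sqrt (a^2+4*x₀^2)) / (2*x₀) := by
  by_contra hcon
  push_neg at hcon
  set L : ℝ → ℝ := fun x => (a + Real.sqrt (a^2+4*x^2))/(2*x) with hLdef
  obtain ⟨hs00, hs02, hs0a⟩ := L_facts a x₀ hx₀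
  have hLx₀pos : 0 < L x₀ := by
    have h : 0 < a + Real.sqrt (a^2+4*x₀^2) := by linarith
    exact div_pos h (by linarith)
  set θ := (f x₀ + L x₀)/2 with hθdef
  set ε := (f x₀ - L x₀)/2 with hεdef
  have hεpos : 0 < ε := by rw [hεdef]; simp only [hLdef] at hcon ⊢; linarith
  have hθpos : 0 < θ := by rw [hθdef]; have := hfpos x₀ le_rfl; linarith
  have hθL : L x₀ + ε = θ := by rw [hθdef, hεdef]; ring
  have hfx₀ : f x₀ = θ + ε := by rw [hθdef, hεdef]; ring
  have hcont : ContinuousOn f (Ici x₀) := fun x hx =>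
    (hf x hx).continuousAt.continuousWithinAt
  -- lower bound on the derivative where f ≥ θ
  have hderivLB : ∀ x, x₀ ≤ x → θ ≤ f x → ε * θ ≤ f x^2 - (a/x)*f x - 1 := by
    intro x hxx hfθ
    have hx : 0 < x := lt_of_lt_of_le hx₀ hxx
    obtain ⟨hs0, hs2, hsa⟩ := L_facts a x hx
    have hLa : L x ≤ L x₀ := L_anti a ha hx₀ hxx
    have hroot : (L x)^2 - (a/x)*(L x) - 1 = 0 := by
      simp only [hLdef]
      field_simp
      nlinarith [hs2]
    have hLax : a/x ≤ L x := by
      simp only [hLdef]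
      rw [div_le_div_iff₀ hx (by linarith)]
      nlinarith
    have t1 : ε ≤ f x - L x := by linarith
    have t2 : θ ≤ f x + L x - a/x := by linarith
    have hmul : ε * θ ≤ (f x - L x) * (f x + L x - a/x) :=
      mul_le_mul t1 t2 hθpos.le (le_trans hεpos.le t1)
    nlinarith [hmul, hroot]
  -- Step A : f stays ≥ θ
  have stepA : ∀ x, x₀ ≤ x → θ ≤ f x := by
    intro x₁ hx₁
    by_contra hB
    push_neg at hB
    set B := Icc x₀ x₁ ∩ f ⁻¹' (Iic θ) with hBdef
    have hx₁B : x₁ ∈ B := ⟨⟨hx₁, le_rfl⟩, hB.le⟩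
    have hBclosed : IsClosed B :=
      (hcont.mono (Icc_subset_Ici_self)).preimage_isClosed_of_isClosed
        isClosed_Icc isClosed_Iic
    have hBbdd : BddBelow B := ⟨x₀, fun y hy => hy.1.1⟩
    set m := sInf B with hm
    have hmB : m ∈ B := hBclosed.csInf_mem ⟨x₁, hx₁B⟩ hBbdd
    have hmx₀ : x₀ < m := by
      rcases lt_or_eq_of_le hmB.1.1 with h | h
      · exact h
      · exfalso; have : f m ≤ θ := hmB.2
        rw [← h] at this; linarith
    have hbelow : ∀ y, y ∈ Ico x₀ m → θ < f y := by
      intro y hy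
      by_contra hy2
      push_neg at hy2
      have : y ∈ B := ⟨⟨hy.1, le_trans hy.2.le hmB.1.2⟩, hy2⟩
      exact absurd (csInf_le hBbdd this) (not_le.mpr hy.2)
    have hmono : StrictMonoOn f (Icc x₀ m) := by
      apply strictMonoOn_of_deriv_pos (convex_Icc _ _)
        (hcont.mono (Icc_subset_Ici_self))
      intro y hy
      rw [interior_Icc] at hy
      have hyx₀ : x₀ ≤ y := hy.1.le
      have hfy : θ ≤ f y := (hbelow y ⟨hyx₀, hy.2⟩).le
      rw [(hf y hyx₀).deriv]
      calc (0:ℝ) < ε * θ := mul_pos hεpos hθpos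
        _ ≤ _ := hderivLB y hyx₀ hfy
    have h1 : f x₀ < f m := hmono ⟨le_rfl, hmx₀.le⟩ ⟨hmx₀.le, le_rfl⟩ hmx₀
    have h2 : f m ≤ θ := hmB.2
    linarith
  -- Step B : linear growth
  have stepB : ∀ x, x₀ ≤ x → θ + ε * θ * (x - x₀) ≤ f x := by
    intro x hx
    have hDfun : ∀ y, x₀ ≤ y → HasDerivAt (fun z => f z - ε * θ * z)
        (f y^2 - (a/y)*f y - 1 - ε * θ) y := by
      intro y hy
      have h1 : HasDerivAt (fun z : ℝ => ε * θ * z) (ε * θ) y := by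
        simpa using (hasDerivAt_id y).const_mul (ε*θ)
      exact (hf y hy).sub h1
    rcases eq_or_lt_of_le hx with h | h
    · rw [← h]
      simp only [sub_self, mul_zero, add_zero]
      linarith
    have hmono : MonotoneOn (fun y => f y - ε * θ * y) (Icc x₀ x) := by
      apply monotoneOn_of_deriv_nonneg (convex_Icc _ _)
      · exact ((hcont.mono Icc_subset_Ici_self).sub
          (continuous_const.mul continuous_id).continuousOn)
      · intro y hy
        rw [interior_Icc] at hy
        exact (hDfun y hy.1.le).differentiableAt.differentiableWithinAt
      · intro y hy
        rw [interior_Icc] at hy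
        rw [(hDfun y hy.1.le).deriv]
        have := hderivLB y hy.1.le (stepA y hy.1.le)
        linarith
    have hm := hmono ⟨le_rfl, hx⟩ ⟨hx, le_rfl⟩ hx
    simp only at hm
    have e : ε*θ*(x-x₀) = ε*θ*x - ε*θ*x₀ := by ring
    linarith
  -- Step C : blow-up
  set M := 2*(a/x₀) + 2 with hMdef
  have hM2 : 2 ≤ M := by
    have h0 : 0 ≤ a/x₀ := div_nonneg ha hx₀.le
    rw [hMdef]; linarith
  set x₁ := x₀ + (M+1)/(ε*θ) with hx₁def
  have hx₁ge : x₀ ≤ x₁ := by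
    rw [hx₁def]
    have : 0 ≤ (M+1)/(ε*θ) := div_nonneg (by linarith) (mul_pos hεpos hθpos).le
    linarith
  have hfM : ∀ x, x₁ ≤ x → M ≤ f x := by
    intro x hx
    have hxx₀ : x₀ ≤ x := le_trans hx₁ge hx
    have h1 := stepB x hxx₀
    have h2 : M + 1 ≤ ε * θ * (x - x₀) := by
      have h3 : (M+1)/(ε*θ) ≤ x - x₀ := by rw [hx₁def] at hx; linarith
      rw [div_le_iff₀ (mul_pos hεpos hθpos)] at h3
      linarith
    linarith
  have hquad : ∀ x, x₁ ≤ x → f x^2/4 ≤ f x^2 - (a/x)*f x - 1 := by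
    intro x hx
    have hxx₀ : x₀ ≤ x := le_trans hx₁ge hx
    have hx0 : 0 < x := lt_of_lt_of_le hx₀ hxx₀
    have haq : a/x ≤ a/x₀ := div_le_div_of_nonneg_left ha hx₀ hxx₀
    have hMf : M ≤ f x := hfM x hx
    have hfpos' : 0 < f x := hfpos x hxx₀
    have key : ∀ F q q₀ : ℝ, 0 ≤ q₀ → 0 < F → 2*q₀+2 ≤ F → q*F ≤ q₀*F →
        F^2/4 ≤ F^2 - q*F - 1 := by
      intro F q q₀ hq₀ hF h1 h2
      nlinarith [mul_le_mul_of_nonneg_right h1 hF.le, sq_nonneg (F-2)]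
    rw [hMdef] at hMf
    exact key (f x) (a/x) (a/x₀) (div_nonneg ha hx₀.le) hfpos' hMf
      (mul_le_mul_of_nonneg_right haq hfpos'.le)
  set x₂ := x₁ + 3 with hx₂def
  have hψD : ∀ y, x₁ ≤ y → HasDerivAt (fun z => z/4 + (f z)⁻¹)
      (1/4 + -(f y^2 - (a/y)*f y - 1) / (f y)^2) y := by
    intro y hy
    have hyx₀ : x₀ ≤ y := le_trans hx₁ge hy
    have h1 : HasDerivAt (fun z : ℝ => z/4) (1/4) y := by
      simpa using (hasDerivAt_id y).div_const 4
    exact h1.add ((hf y hyx₀).inv (hfpos y hyx₀).ne')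
  have hanti : AntitoneOn (fun y => y/4 + (f y)⁻¹) (Icc x₁ x₂) := by
    apply antitoneOn_of_deriv_nonpos (convex_Icc _ _)
    · apply ContinuousOn.add
      · exact (continuous_id.div_const 4).continuousOn
      · apply ContinuousOn.inv₀
        · exact hcont.mono (fun y hy => le_trans hx₁ge hy.1)
        · intro y hy
          exact (hfpos y (le_trans hx₁ge hy.1)).ne'
    · intro y hy
      rw [interior_Icc] at hy
      exact (hψD y hy.1.le).differentiableAt.differentiableWithinAt
    · intro y hy
      rw [interior_Icc] at hy
      rw [(hψD y hy.1.le).deriv]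
      have hq := hquad y hy.1.le
      have hfy : 0 < f y := hfpos y (le_trans hx₁ge hy.1.le)
      have hfy2 : 0 < f y^2 := by positivity
      have h7 : -(f y^2 - (a/y)*f y - 1)/(f y)^2 ≤ -(1/4) := by
        rw [div_le_iff₀ hfy2]
        linarith
      linarith
  have hx₂ge : x₁ ≤ x₂ := by rw [hx₂def]; linarith
  have hψ := hanti ⟨le_rfl, hx₂ge⟩ ⟨hx₂ge, le_rfl⟩ hx₂ge
  simp only at hψ
  have hfx₁M : M ≤ f x₁ := hfM x₁ le_rfl
  have hinv1 : (f x₁)⁻¹ ≤ 2⁻¹ := by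
    apply inv_anti₀ (by norm_num)
    linarith
  have hfx₂pos : 0 < f x₂ := hfpos x₂ (le_trans hx₁ge hx₂ge)
  have hinv2 : 0 < (f x₂)⁻¹ := by positivity
  rw [hx₂def] at hψ
  norm_num at hinv1 ⊢
  linarith

set_option maxHeartbeats 800000 in
lemma riccati_upper_strict (a x₀ : ℝ) (ha : 0 < a) (hx₀ : 0 < x₀) (f : ℝ → ℝ)
    (hf : ∀ x, x₀ ≤ x → HasDerivAt f (f x^2 - (a/x)*f x - 1) x)
    (hfpos : ∀ x, x₀ ≤ x → 0 < f x) :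
    f x₀ < (a + Real.sqrt (a^2+4*x₀^2)) / (2*x₀) := by
  rcases lt_or_eq_of_le (riccati_upper a x₀ ha.le hx₀ f hf hfpos) with h | h
  · exact h
  exfalso
  set L : ℝ → ℝ := fun x => (a + Real.sqrt (a^2+4*x^2))/(2*x) with hLdef
  obtain ⟨hs0, hs2, hsa⟩ := L_facts a x₀ hx₀
  -- derivative of L at x₀
  have hinner : HasDerivAt (fun x : ℝ => a^2 + 4*x^2) (8*x₀) x₀ := by
    have h1 : HasDerivAt (fun x : ℝ => x^2) (2*x₀) x₀ := by
      simpa using hasDerivAt_pow 2 x₀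
    have h2 := (h1.const_mul (4:ℝ)).const_add (a^2)
    exact h2.congr_deriv (by ring)
  have hne : a^2 + 4*x₀^2 ≠ 0 := by positivity
  have hsqrtD : HasDerivAt (fun x : ℝ => Real.sqrt (a^2+4*x^2))
      (1/(2*Real.sqrt (a^2+4*x₀^2)) * (8*x₀)) x₀ :=
    (Real.hasDerivAt_sqrt hne).comp x₀ hinner
  have hnum : HasDerivAt (fun x : ℝ => a + Real.sqrt (a^2+4*x^2))
      (1/(2*Real.sqrt (a^2+4*x₀^2)) * (8*x₀)) x₀ := hsqrtD.const_add a
  have hden : HasDerivAt (fun x : ℝ => 2*x) (2:ℝ) x₀ := by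
    simpa using (hasDerivAt_id x₀).const_mul (2:ℝ)
  have hLD : HasDerivAt L
      ((1/(2*Real.sqrt (a^2+4*x₀^2)) * (8*x₀) * (2*x₀) -
        (a + Real.sqrt (a^2+4*x₀^2)) * 2) / (2*x₀)^2) x₀ :=
    hnum.div hden (by positivity)
  set D := (1/(2*Real.sqrt (a^2+4*x₀^2)) * (8*x₀) * (2*x₀) -
        (a + Real.sqrt (a^2+4*x₀^2)) * 2) / (2*x₀)^2 with hDdef
  have hDneg : D < 0 := by
    rw [hDdef]
    apply div_neg_of_neg_of_pos _ (by positivity)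
    have key : 1/(2*Real.sqrt (a^2+4*x₀^2)) * (8*x₀) * (2*x₀) <
        (a + Real.sqrt (a^2+4*x₀^2)) * 2 := by
      rw [div_mul_eq_mul_div, div_mul_eq_mul_div, div_lt_iff₀ (by positivity)]
      nlinarith [hs2, mul_pos ha hs0]
    linarith
  -- f'(x₀) = 0 since f x₀ = L x₀ is the root
  have hroot : f x₀^2 - (a/x₀)*(f x₀) - 1 = 0 := by
    rw [h]
    field_simp
    nlinarith [hs2]
  have hg : HasDerivAt (fun x => L x - f x) D x₀ := by
    have := hLD.sub (hf x₀ le_rfl)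
    rwa [hroot, sub_zero] at this
  have hslope := hasDerivAt_iff_tendsto_slope.mp hg
  have hev : ∀ᶠ x in nhdsWithin x₀ (Ioi x₀), slope (fun x => L x - f x) x₀ x < 0 := by
    apply Filter.Eventually.filter_mono
      (nhdsWithin_mono x₀ (fun y (hy : y ∈ Ioi x₀) => ne_of_gt (show x₀ < y from hy)))
    exact hslope.eventually_lt_const hDneg
  obtain ⟨x, hxs, hxgt⟩ := (hev.and eventually_mem_nhdsWithin).exists
  rw [slope_def_field] at hxs
  have hx0lt : x₀ < x := hxgt
  have hgx₀ : L x₀ - f x₀ = 0 := by rw [h]; ring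
  rw [hgx₀, sub_zero] at hxs
  have hgx : L x - f x < 0 := by
    by_contra hge
    push_neg at hge
    have : 0 ≤ (L x - f x)/(x - x₀) := div_nonneg hge (by linarith)
    linarith
  -- contradiction with riccati_upper at x
  have hub := riccati_upper a x ha.le (lt_trans hx₀ hx0lt) f
    (fun y hy => hf y (le_trans hx0lt.le hy))
    (fun y hy => hfpos y (le_trans hx0lt.le hy))
  simp only [hLdef] at hgx
  linarith


lemma besselF_deriv (K : ℝ → ℝ → ℝ)
    (hpos : ∀ ν : ℝ, ∀ x : ℝ, 0 < x → 0 < K ν x)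
    (hderiv : ∀ ν : ℝ, ∀ x : ℝ, 0 < x →
      HasDerivAt (K ν) (-(K (ν - 1) x + K (ν + 1) x) / 2) x)
    (hrec : ∀ ν : ℝ, ∀ x : ℝ, 0 < x →
      K (ν + 1) x - K (ν - 1) x = (2 * ν / x) * K ν x)
    (ν x : ℝ) (hx : 0 < x) :
    HasDerivAt (fun y => K (ν+1) y / K ν y)
      ((K (ν+1) x / K ν x)^2 - ((2*ν+1)/x) * (K (ν+1) x / K ν x) - 1) x := by
  have h1 := hderiv (ν+1) x hx
  have h2 := hderiv ν x hx
  have e1 : ν + 1 - 1 = ν := by ring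
  rw [e1] at h1
  have hr1 := hrec (ν+1) x hx
  rw [e1] at hr1
  have hr2 := hrec ν x hx
  have hK := (hpos ν x hx).ne'
  have hd := h1.div h2 hK
  have e2 : K (ν+1+1) x = K ν x + (2*(ν+1)/x) * K (ν+1) x := by linarith
  have e3 : K (ν-1) x = K (ν+1) x - (2*ν/x) * K ν x := by linarith
  rw [e2, e3] at hd
  refine hd.congr_deriv ?_
  field_simp
  ring

/-- Segura-type bounds for the ratio of modified Bessel functions of the
second kind: with `K` the modified Bessel family (positive on `(0,∞)`,
satisfying the derivative formula `K_ν'(x) = -(K_{ν-1}(x)+K_{ν+1}(x))/2` and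
the recurrence `K_{ν+1}(x) - K_{ν-1}(x) = (2ν/x) K_ν(x)`), for `σ > 0` and
real `ℓ ≥ 0`:
`√(σ²+ℓ²) + ℓ + 1 ≤ σ K_{ℓ+3/2}(σ)/K_{ℓ+1/2}(σ) < √(σ²+(ℓ+1)²) + ℓ + 1`. -/
theorem modified_bessel_ratio_bounds
    (K : ℝ → ℝ → ℝ)
    (hpos : ∀ ν : ℝ, ∀ x : ℝ, 0 < x → 0 < K ν x)
    (hderiv : ∀ ν : ℝ, ∀ x : ℝ, 0 < x →
      HasDerivAt (K ν) (-(K (ν - 1) x + K (ν + 1) x) / 2) x)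
    (hrec : ∀ ν : ℝ, ∀ x : ℝ, 0 < x →
      K (ν + 1) x - K (ν - 1) x = (2 * ν / x) * K ν x) :
    ∀ σ : ℝ, 0 < σ → ∀ ℓ : ℝ, 0 ≤ ℓ →
      Real.sqrt (σ ^ 2 + ℓ ^ 2) + ℓ + 1 ≤
          σ * K (ℓ + 3 / 2) σ / K (ℓ + 1 / 2) σ ∧
      σ * K (ℓ + 3 / 2) σ / K (ℓ + 1 / 2) σ <
          Real.sqrt (σ ^ 2 + (ℓ + 1) ^ 2) + ℓ + 1 := by
  intro σ hσ ℓ hℓ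
  have e1 : ℓ + 3/2 = (ℓ + 1/2) + 1 := by ring
  constructor
  · -- lower bound
    have hlow := riccati_upper (2*(ℓ-1/2)+1) σ (by linarith) hσ
      (fun x => K (ℓ-1/2+1) x / K (ℓ-1/2) x)
      (fun x hx => besselF_deriv K hpos hderiv hrec (ℓ-1/2) x (lt_of_lt_of_le hσ hx))
      (fun x hx => div_pos (hpos _ x (lt_of_lt_of_le hσ hx)) (hpos _ x (lt_of_lt_of_le hσ hx)))
    rw [show ℓ-1/2+1 = ℓ+1/2 from by ring, show 2*(ℓ-1/2)+1 = 2*ℓ from by ring] at hlow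
    have es2 : Real.sqrt ((2*ℓ)^2+4*σ^2) = 2*Real.sqrt (σ^2+ℓ^2) := by
      rw [show (2*ℓ)^2+4*σ^2 = 2^2*(σ^2+ℓ^2) by ring, Real.sqrt_mul (by positivity),
        Real.sqrt_sq (by norm_num)]
    rw [es2] at hlow
    set u := Real.sqrt (σ^2+ℓ^2) with hudef
    have hu2 : u^2 = σ^2+ℓ^2 := Real.sq_sqrt (by positivity)
    have hu0 : 0 ≤ u := Real.sqrt_nonneg _
    have huℓ : ℓ ≤ u := by nlinarith
    have huσ : σ ≤ u := by nlinarith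
    set P := K (ℓ+3/2) σ with hPdef
    set Q := K (ℓ+1/2) σ with hQdef
    set R := K (ℓ-1/2) σ with hRdef
    have hP : 0 < P := hpos _ _ hσ
    have hQ : 0 < Q := hpos _ _ hσ
    have hR : 0 < R := hpos _ _ hσ
    have hrecσ : σ * P = σ * R + (2*ℓ+1) * Q := by
      have h := hrec (ℓ+1/2) σ hσ
      rw [show ℓ+1/2-1 = ℓ-1/2 from by ring, show ℓ+1/2+1 = ℓ+3/2 from by ring,
        ← hPdef, ← hQdef, ← hRdef] at h
      have h4 : σ * (P - R) = σ * ((2*(ℓ+1/2)/σ)*Q) := by rw [h]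
      have h5 : σ * ((2*(ℓ+1/2)/σ)*Q) = (2*ℓ+1)*Q := by
        rw [show σ * ((2*(ℓ+1/2)/σ)*Q) = (2*(ℓ+1/2)) * Q * (σ / σ) by ring,
          div_self hσ.ne', mul_one]
        ring
      rw [mul_sub] at h4
      linarith
    have hlow' : Q * (2*σ) ≤ (2*ℓ + 2*u) * R := by
      rw [div_le_div_iff₀ hR (by linarith)] at hlow
      linarith
    have hgoal : (u + ℓ + 1) * Q ≤ σ * P := by
      have key := mul_le_mul_of_nonneg_left hlow' (by linarith : (0:ℝ) ≤ u - ℓ)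
      nlinarith [key, hu2, mul_pos hσ hR]
    rw [mul_div_assoc, ← sub_nonneg]
    have heq : σ * (P / Q) - (u + ℓ + 1) = (σ * P - (u + ℓ + 1) * Q) / Q := by
      field_simp
    rw [heq]
    have : 0 ≤ σ * P - (u + ℓ + 1) * Q := by linarith
    positivity
  · -- upper bound
    have hup := riccati_upper_strict (2*(ℓ+1/2)+1) σ (by linarith) hσ
      (fun x => K (ℓ+1/2+1) x / K (ℓ+1/2) x)
      (fun x hx => besselF_deriv K hpos hderiv hrec (ℓ+1/2) x (lt_of_lt_of_le hσ hx))
      (fun x hx => div_pos (hpos _ x (lt_of_lt_of_le hσ hx)) (hpos _ x (lt_of_lt_of_le hσ hx)))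
    rw [show 2*(ℓ+1/2)+1 = 2*ℓ+2 from by ring] at hup
    have es : Real.sqrt ((2*ℓ+2)^2+4*σ^2) = 2*Real.sqrt (σ^2+(ℓ+1)^2) := by
      rw [show (2*ℓ+2)^2+4*σ^2 = 2^2*(σ^2+(ℓ+1)^2) by ring, Real.sqrt_mul (by positivity),
        Real.sqrt_sq (by norm_num)]
    rw [es] at hup
    rw [e1, mul_div_assoc]
    set v := Real.sqrt (σ^2+(ℓ+1)^2) with hvdef
    calc σ * (K (ℓ+1/2+1) σ / K (ℓ+1/2) σ)
        < σ * ((2*ℓ+2 + 2*v)/(2*σ)) := by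
          exact mul_lt_mul_of_pos_left hup hσ
      _ = v + ℓ + 1 := by field_simp; ring
end

section
/- Interlacing of Bessel zeros: for λ > 0 and s ∈ ℕ₊, the positive zeros of J_λ and J_{λ+1} satisfy j_{λ,s} < j_{λ+1,s} < j_{λ,s+1}, where j_{λ,s} denotes the s-th positive zero of the Bessel function J_λ. -/
open Set

/-- On an interval `(0,c)` a continuous nonvanishing function has constant sign. -/
private lemma bessel_aux_sign_dichotomy {f : ℝ → ℝ} {c : ℝ} (hc : 0 < c)
    (hcont : ContinuousOn f (Ioo 0 c))
    (hne : ∀ x ∈ Ioo (0:ℝ) c, f x ≠ 0) :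
    (∀ x ∈ Ioo (0:ℝ) c, 0 < f x) ∨ (∀ x ∈ Ioo (0:ℝ) c, f x < 0) := by
  have hx0 : c / 2 ∈ Ioo (0:ℝ) c := ⟨by linarith, by linarith⟩
  have key : ∀ x ∈ Ioo (0:ℝ) c, ∀ y ∈ Ioo (0:ℝ) c, f x < 0 → 0 < f y → False := by
    intro x hx y hy hfx hfy
    rcases lt_trichotomy x y with h | h | h
    · have hsub : Icc x y ⊆ Ioo 0 c := Set.Icc_subset _ hx hy
      have h0 : (0:ℝ) ∈ Ioo (f x) (f y) := ⟨hfx, hfy⟩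
      obtain ⟨z, hz, hz0⟩ := intermediate_value_Ioo h.le (hcont.mono hsub) h0
      exact hne z (hsub (Ioo_subset_Icc_self hz)) hz0
    · rw [h] at hfx; linarith
    · have hsub : Icc y x ⊆ Ioo 0 c := Set.Icc_subset _ hy hx
      have h0 : (0:ℝ) ∈ Ioo (f x) (f y) := ⟨hfx, hfy⟩
      obtain ⟨z, hz, hz0⟩ := intermediate_value_Ioo' h.le (hcont.mono hsub) h0
      exact hne z (hsub (Ioo_subset_Icc_self hz)) hz0
  rcases (hne _ hx0).lt_or_gt with h | h
  · right
    intro x hx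
    rcases (hne _ hx).lt_or_gt with h' | h'
    · exact h'
    · exact absurd (key _ hx0 _ hx h h') (fun t => t)
  · left
    intro x hx
    rcases (hne _ hx).lt_or_gt with h' | h'
    · exact absurd (key _ hx _ hx0 h' h) (fun t => t)
    · exact h'

/-- Riccati-type contradiction: there is no solution pair with `u > 0`, `v < 0`
on an interval `(0,b)`. -/
private lemma bessel_aux_riccati {lam : ℝ} (hlam : 0 < lam) {u v : ℝ → ℝ}
    (hu : ∀ x : ℝ, 0 < x → HasDerivAt u (lam / x * u x - v x) x)
    (hv : ∀ x : ℝ, 0 < x → HasDerivAt v (u x - (lam + 1) / x * v x) x)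
    {b : ℝ} (hb : 0 < b)
    (hupos : ∀ x ∈ Ioo (0:ℝ) b, 0 < u x)
    (hvneg : ∀ x ∈ Ioo (0:ℝ) b, v x < 0) : False := by
  set r : ℝ → ℝ := fun x => u x / (-(v x)) with hrdef
  set D : ℝ → ℝ := fun x =>
    ((lam / x * u x - v x) * (-(v x)) - u x * (-(u x - (lam + 1) / x * v x))) / (-(v x))^2
    with hDdef
  have hrd : ∀ x ∈ Ioo (0:ℝ) b, HasDerivAt r (D x) x := by
    intro x hx
    exact (hu x hx.1).div ((hv x hx.1).neg)
      (by have := hvneg x hx; intro h; rw [neg_eq_zero] at h; linarith)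
  have hrpos : ∀ x ∈ Ioo (0:ℝ) b, 0 < r x := by
    intro x hx
    exact div_pos (hupos x hx) (by linarith [hvneg x hx])
  -- key induction: r x ≥ n * x for every n
  have key : ∀ n : ℕ, ∀ x ∈ Ioo (0:ℝ) b, (n : ℝ) * x ≤ r x := by
    intro n
    induction n with
    | zero => intro x hx; simpa using (hrpos x hx).le
    | succ n ih =>
      -- derivative lower bound
      have hDbound : ∀ t ∈ Ioo (0:ℝ) b, ((n : ℝ) + 1) ≤ D t := by
        intro t ht
        have hut := hupos t ht
        have hvt := hvneg t ht
        have ht0 := ht.1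
        have hv2 : (0:ℝ) < (v t)^2 := by nlinarith [hvt]
        have h2 : (n : ℝ) * t * (v t)^2 ≤ u t * (-(v t)) := by
          have hit := ih t ht
          rw [hrdef] at hit
          have hw : (0:ℝ) < -(v t) := by linarith
          have hit2 := (le_div_iff₀ hw).mp hit
          nlinarith [hit2]
        have hnum : ((lam / t * u t - v t) * (-(v t)) - u t * (-(u t - (lam + 1) / t * v t)))
            = (u t)^2 + (v t)^2 + ((2*lam+1) * (u t * (-(v t))))/t := by
          field_simp
          ring
        rw [hDdef]
        simp only []
        rw [hnum, (by ring : (-(v t))^2 = (v t)^2), le_div_iff₀ hv2]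
        have h5 : (2*lam+1) * ((n:ℝ) * (v t)^2) ≤ ((2*lam+1) * (u t * (-(v t))))/t := by
          rw [le_div_iff₀ ht0]
          nlinarith [mul_le_mul_of_nonneg_left h2 (show (0:ℝ) ≤ 2*lam+1 by linarith)]
        nlinarith [h5, sq_nonneg (u t),
          mul_nonneg (mul_nonneg hlam.le (Nat.cast_nonneg (α := ℝ) n)) hv2.le]
      intro x hx
      -- for every ε in (0,x): (n+1)*(x-ε) ≤ r x - r ε
      have hstep : ∀ ε ∈ Ioo (0:ℝ) x, ((n:ℝ)+1) * (x - ε) ≤ r x - r ε := by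
        intro ε hε
        have hsub : Icc ε x ⊆ Ioo (0:ℝ) b := fun t ht =>
          ⟨lt_of_lt_of_le hε.1 ht.1, lt_of_le_of_lt ht.2 hx.2⟩
        have hsub' : Ioo ε x ⊆ Ioo (0:ℝ) b := fun t ht =>
          hsub (Ioo_subset_Icc_self ht)
        have hcont : ContinuousOn r (Icc ε x) := fun t ht =>
          ((hrd t (hsub ht)).continuousAt).continuousWithinAt
        have hdiff : DifferentiableOn ℝ r (interior (Icc ε x)) := by
          rw [interior_Icc]
          exact fun t ht => ((hrd t (hsub' ht)).differentiableAt).differentiableWithinAt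
        have hdge : ∀ t ∈ interior (Icc ε x), ((n:ℝ)+1) ≤ deriv r t := by
          rw [interior_Icc]
          intro t ht
          rw [(hrd t (hsub' ht)).deriv]
          exact hDbound t (hsub' ht)
        have := (convex_Icc ε x).mul_sub_le_image_sub_of_le_deriv hcont hdiff hdge
          ε (left_mem_Icc.mpr hε.2.le) x (right_mem_Icc.mpr hε.2.le) hε.2.le
        linarith [this]
      -- conclude (n+1)*x ≤ r x
      by_contra hcon
      push_neg at hcon
      set δ : ℝ := ((n:ℝ)+1) * x - r x with hδdef
      have hδ : 0 < δ := by
        have : ((n:ℝ)+1) * x = ((n:ℝ)+1) * x := rfl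
        have hcast : ((n+1 : ℕ) : ℝ) = (n:ℝ) + 1 := by push_cast; ring
        rw [hcast] at hcon
        simp only [hδdef]
        linarith
      have hn1 : (0:ℝ) < (n:ℝ) + 1 := by positivity
      set ε : ℝ := min (x/2) (δ / (2*((n:ℝ)+1))) with hεdef
      have hε1 : 0 < ε := lt_min (by linarith [hx.1]) (by positivity)
      have hε2 : ε < x := lt_of_le_of_lt (min_le_left _ _) (by linarith [hx.1])
      have hεd : ε ≤ δ / (2*((n:ℝ)+1)) := min_le_right _ _
      have h6 : ((n:ℝ)+1) * ε ≤ δ/2 := by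
        have := mul_le_mul_of_nonneg_left hεd hn1.le
        have heq : ((n:ℝ)+1) * (δ / (2*((n:ℝ)+1))) = δ/2 := by
          field_simp
        linarith [heq ▸ this]
      have h7 := hstep ε ⟨hε1, hε2⟩
      have h8 : 0 < r ε := hrpos ε ⟨hε1, lt_trans hε2 hx.2⟩
      simp only [hδdef] at h6
      nlinarith [h7, h8, h6]
  -- final contradiction
  have hx0 : b/2 ∈ Ioo (0:ℝ) b := ⟨by linarith, by linarith⟩
  obtain ⟨n, hn⟩ := exists_nat_gt (r (b/2) / (b/2))
  have h1 := key n (b/2) hx0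
  have h2 : r (b/2) < (n:ℝ) * (b/2) := by
    have hb2 : (0:ℝ) < b/2 := by linarith
    have := (div_lt_iff₀ hb2).mp hn
    linarith
  linarith

/-- If `u > 0` on `(0, a1)` and `v` vanishes at some `b1 ∈ (0, a1]`, contradiction. -/
private lemma bessel_aux_no_early_zero_pos {lam : ℝ} (hlam : 0 < lam) {u v : ℝ → ℝ}
    (hu : ∀ x : ℝ, 0 < x → HasDerivAt u (lam / x * u x - v x) x)
    (hv : ∀ x : ℝ, 0 < x → HasDerivAt v (u x - (lam + 1) / x * v x) x)
    {a1 b1 : ℝ} (hb1 : 0 < b1) (hba : b1 ≤ a1)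
    (hvz : v b1 = 0)
    (hupos : ∀ x ∈ Ioo (0:ℝ) a1, 0 < u x) : False := by
  set g : ℝ → ℝ := fun x => x ^ (lam + 1) * v x with hgdef
  have hg : ∀ x : ℝ, 0 < x → HasDerivAt g (x ^ (lam + 1) * u x) x := by
    intro x hx
    have hp : HasDerivAt (fun y : ℝ => y ^ (lam + 1)) ((lam + 1) * x ^ (lam + 1 - 1)) x :=
      Real.hasDerivAt_rpow_const (Or.inl hx.ne')
    have := hp.mul (hv x hx)
    refine this.congr_deriv (Eq.symm ?_)
    have hxr : x ^ (lam + 1) = x ^ lam * x := by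
      rw [Real.rpow_add hx, Real.rpow_one]
    have hxr1 : x ^ (lam + 1 - 1) = x ^ lam := by norm_num
    rw [hxr, hxr1]
    field_simp
    ring
  have hvneg : ∀ x ∈ Ioo (0:ℝ) b1, v x < 0 := by
    intro x hx
    have hmono : StrictMonoOn g (Icc x b1) := by
      apply strictMonoOn_of_deriv_pos (convex_Icc x b1)
      · intro t ht
        have ht0 : 0 < t := lt_of_lt_of_le hx.1 ht.1
        exact ((hg t ht0).continuousAt).continuousWithinAt
      · rw [interior_Icc]
        intro t ht
        have ht0 : 0 < t := lt_trans hx.1 ht.1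
        rw [(hg t ht0).deriv]
        have hut : 0 < u t := hupos t ⟨ht0, lt_of_lt_of_le ht.2 hba⟩
        positivity
    have hlt : g x < g b1 :=
      hmono (left_mem_Icc.mpr hx.2.le) (right_mem_Icc.mpr hx.2.le) hx.2
    rw [hgdef] at hlt
    simp only [hvz, mul_zero] at hlt
    have hxp : (0:ℝ) < x ^ (lam + 1) := Real.rpow_pos_of_pos hx.1 _
    nlinarith [hlt, hxp]
  exact bessel_aux_riccati hlam hu hv hb1
    (fun x hx => hupos x ⟨hx.1, lt_of_lt_of_le hx.2 hba⟩) hvneg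

/-- The first positive zero of `v` cannot be ≤ the first positive zero of `u`. -/
private lemma bessel_aux_no_early_zero {lam : ℝ} (hlam : 0 < lam) {u v : ℝ → ℝ}
    (hu : ∀ x : ℝ, 0 < x → HasDerivAt u (lam / x * u x - v x) x)
    (hv : ∀ x : ℝ, 0 < x → HasDerivAt v (u x - (lam + 1) / x * v x) x)
    {a1 b1 : ℝ} (hb1 : 0 < b1) (hba : b1 ≤ a1)
    (hvz : v b1 = 0)
    (hune : ∀ x ∈ Ioo (0:ℝ) a1, u x ≠ 0) : False := by
  have ha1 : 0 < a1 := lt_of_lt_of_le hb1 hba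
  have hcont : ContinuousOn u (Ioo 0 a1) := fun t ht =>
    ((hu t ht.1).continuousAt).continuousWithinAt
  rcases bessel_aux_sign_dichotomy ha1 hcont hune with hpos | hneg
  · exact bessel_aux_no_early_zero_pos hlam hu hv hb1 hba hvz hpos
  · have hu' : ∀ x : ℝ, 0 < x →
        HasDerivAt (fun y => -(u y)) (lam / x * (-(u x)) - (-(v x))) x := by
      intro x hx
      have := (hu x hx).neg
      refine this.congr_deriv (Eq.symm ?_)
      ring
    have hv' : ∀ x : ℝ, 0 < x →
        HasDerivAt (fun y => -(v y)) ((-(u x)) - (lam + 1) / x * (-(v x))) x := by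
      intro x hx
      have := (hv x hx).neg
      refine this.congr_deriv (Eq.symm ?_)
      ring
    exact bessel_aux_no_early_zero_pos hlam hu' hv' hb1 hba
      (by simp [hvz]) (fun x hx => by simpa using (hneg x hx))

/-- Rolle: between two positive zeros of `u` there is a zero of `v`. -/
private lemma bessel_aux_rolle_u {lam : ℝ} {u v : ℝ → ℝ}
    (hu : ∀ x : ℝ, 0 < x → HasDerivAt u (lam / x * u x - v x) x)
    {a b : ℝ} (ha : 0 < a) (hab : a < b) (hua : u a = 0) (hub : u b = 0) :
    ∃ c ∈ Ioo a b, v c = 0 := by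
  set f : ℝ → ℝ := fun x => x ^ (-lam) * u x with hfdef
  have hf : ∀ x : ℝ, 0 < x → HasDerivAt f (-(x ^ (-lam) * v x)) x := by
    intro x hx
    have hp : HasDerivAt (fun y : ℝ => y ^ (-lam)) ((-lam) * x ^ (-lam - 1)) x :=
      Real.hasDerivAt_rpow_const (Or.inl hx.ne')
    have := hp.mul (hu x hx)
    refine this.congr_deriv (Eq.symm ?_)
    have hxr : x ^ (-lam - 1) = x ^ (-lam) / x := by
      rw [Real.rpow_sub hx, Real.rpow_one]
    rw [hxr]
    field_simp
    ring
  have hcont : ContinuousOn f (Icc a b) := fun t ht =>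
    ((hf t (lt_of_lt_of_le ha ht.1)).continuousAt).continuousWithinAt
  have hfI : f a = f b := by
    rw [hfdef]; simp [hua, hub]
  obtain ⟨c, hc, hc0⟩ := exists_hasDerivAt_eq_zero hab hcont hfI
    (fun x hx => hf x (lt_trans ha hx.1))
  refine ⟨c, hc, ?_⟩
  have hcp : (0:ℝ) < c ^ (-lam) := Real.rpow_pos_of_pos (lt_trans ha hc.1) _
  have : c ^ (-lam) * v c = 0 := by linarith [hc0]
  rcases mul_eq_zero.mp this with h | h
  · exact absurd h hcp.ne'
  · exact h

/-- Rolle: between two positive zeros of `v` there is a zero of `u`. -/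
private lemma bessel_aux_rolle_v {lam : ℝ} {u v : ℝ → ℝ}
    (hv : ∀ x : ℝ, 0 < x → HasDerivAt v (u x - (lam + 1) / x * v x) x)
    {a b : ℝ} (ha : 0 < a) (hab : a < b) (hva : v a = 0) (hvb : v b = 0) :
    ∃ c ∈ Ioo a b, u c = 0 := by
  set g : ℝ → ℝ := fun x => x ^ (lam + 1) * v x with hgdef
  have hg : ∀ x : ℝ, 0 < x → HasDerivAt g (x ^ (lam + 1) * u x) x := by
    intro x hx
    have hp : HasDerivAt (fun y : ℝ => y ^ (lam + 1)) ((lam + 1) * x ^ (lam + 1 - 1)) x :=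
      Real.hasDerivAt_rpow_const (Or.inl hx.ne')
    have := hp.mul (hv x hx)
    refine this.congr_deriv (Eq.symm ?_)
    have hxr : x ^ (lam + 1) = x ^ lam * x := by
      rw [Real.rpow_add hx, Real.rpow_one]
    have hxr1 : x ^ (lam + 1 - 1) = x ^ lam := by norm_num
    rw [hxr, hxr1]
    field_simp
    ring
  have hcont : ContinuousOn g (Icc a b) := fun t ht =>
    ((hg t (lt_of_lt_of_le ha ht.1)).continuousAt).continuousWithinAt
  have hgI : g a = g b := by
    rw [hgdef]; simp [hva, hvb]
  obtain ⟨c, hc, hc0⟩ := exists_hasDerivAt_eq_zero hab hcont hgI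
    (fun x hx => hg x (lt_trans ha hx.1))
  refine ⟨c, hc, ?_⟩
  have hcp : (0:ℝ) < c ^ (lam + 1) := Real.rpow_pos_of_pos (lt_trans ha hc.1) _
  rcases mul_eq_zero.mp hc0 with h | h
  · exact absurd h hcp.ne'
  · exact h

/-- Interlacing of the positive zeros of Bessel functions: with `J` the Bessel
family of the first kind (characterized by the two derivative formulas
`J_ν' = J_{ν-1} - (ν/x) J_ν = (ν/x) J_ν - J_{ν+1}`) and `j λ s` the `s`-th
positive zero of `J_λ` (listed increasingly and exhausting all positive
zeros), for every `λ > 0` and `s ≥ 1`: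
`j_{λ,s} < j_{λ+1,s} < j_{λ,s+1}`. -/
theorem bessel_zero_interlacing
    (J : ℝ → ℝ → ℝ)
    (hderiv : ∀ ν : ℝ, ∀ x : ℝ, 0 < x →
      HasDerivAt (J ν) (J (ν - 1) x - (ν / x) * J ν x) x)
    (hderiv' : ∀ ν : ℝ, ∀ x : ℝ, 0 < x →
      HasDerivAt (J ν) ((ν / x) * J ν x - J (ν + 1) x) x)
    (j : ℝ → ℕ → ℝ)
    (hjpos : ∀ lam : ℝ, 0 < lam → 0 < j lam 1)
    (hjmono : ∀ lam : ℝ, 0 < lam → StrictMonoOn (j lam) (Ici 1))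
    (hjzero : ∀ lam : ℝ, 0 < lam → ∀ s : ℕ, 1 ≤ s → J lam (j lam s) = 0)
    (hjall : ∀ lam : ℝ, 0 < lam → ∀ x : ℝ, 0 < x → J lam x = 0 →
      ∃ s : ℕ, 1 ≤ s ∧ x = j lam s) :
    ∀ lam : ℝ, 0 < lam → ∀ s : ℕ, 1 ≤ s →
      j lam s < j (lam + 1) s ∧ j (lam + 1) s < j lam (s + 1) := by
  intro lam hlam
  have hlam1 : 0 < lam + 1 := by linarith
  set u : ℝ → ℝ := J lam with hudef
  set v : ℝ → ℝ := J (lam + 1) with hvdef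
  have hu : ∀ x : ℝ, 0 < x → HasDerivAt u (lam / x * u x - v x) x :=
    fun x hx => hderiv' lam x hx
  have hv : ∀ x : ℝ, 0 < x → HasDerivAt v (u x - (lam + 1) / x * v x) x := by
    intro x hx
    have h := hderiv (lam + 1) x hx
    rw [show lam + 1 - 1 = lam by ring] at h
    exact h
  set a : ℕ → ℝ := j lam with hadef
  set b : ℕ → ℝ := j (lam + 1) with hbdef
  have ha1 : 0 < a 1 := hjpos lam hlam
  have hb1 : 0 < b 1 := hjpos (lam + 1) hlam1
  have hamono : ∀ {p q : ℕ}, 1 ≤ p → p ≤ q → a p ≤ a q := by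
    intro p q hp hpq
    exact (hjmono lam hlam).monotoneOn (Set.mem_Ici.mpr hp)
      (Set.mem_Ici.mpr (le_trans hp hpq)) hpq
  have hbmono : ∀ {p q : ℕ}, 1 ≤ p → p ≤ q → b p ≤ b q := by
    intro p q hp hpq
    exact (hjmono (lam + 1) hlam1).monotoneOn (Set.mem_Ici.mpr hp)
      (Set.mem_Ici.mpr (le_trans hp hpq)) hpq
  have hastrict : ∀ {p q : ℕ}, 1 ≤ p → p < q → a p < a q := by
    intro p q hp hpq
    exact hjmono lam hlam (Set.mem_Ici.mpr hp)
      (Set.mem_Ici.mpr (le_trans hp hpq.le)) hpq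
  have hbstrict : ∀ {p q : ℕ}, 1 ≤ p → p < q → b p < b q := by
    intro p q hp hpq
    exact hjmono (lam + 1) hlam1 (Set.mem_Ici.mpr hp)
      (Set.mem_Ici.mpr (le_trans hp hpq.le)) hpq
  have hapos : ∀ s : ℕ, 1 ≤ s → 0 < a s := fun s hs => lt_of_lt_of_le ha1 (hamono le_rfl hs)
  have hbpos : ∀ s : ℕ, 1 ≤ s → 0 < b s := fun s hs => lt_of_lt_of_le hb1 (hbmono le_rfl hs)
  have hazero : ∀ s : ℕ, 1 ≤ s → u (a s) = 0 := fun s hs => hjzero lam hlam s hs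
  have hbzero : ∀ s : ℕ, 1 ≤ s → v (b s) = 0 := fun s hs => hjzero (lam + 1) hlam1 s hs
  -- first inequality for s = 1
  have hfirst : a 1 < b 1 := by
    by_contra hcon
    push_neg at hcon
    have hune : ∀ x ∈ Ioo (0:ℝ) (a 1), u x ≠ 0 := by
      intro x hx hx0
      obtain ⟨t, ht1, rfl⟩ := hjall lam hlam x hx.1 hx0
      exact absurd (hamono le_rfl ht1) (not_le.mpr hx.2)
    exact bessel_aux_no_early_zero hlam hu hv hb1 hcon (hbzero 1 le_rfl) hune
  -- main induction
  intro s hs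
  induction s, hs using Nat.le_induction with
  | base =>
    constructor
    · exact hfirst
    · obtain ⟨c, hc, hc0⟩ := bessel_aux_rolle_u hu ha1 (hastrict le_rfl one_lt_two)
        (hazero 1 le_rfl) (hazero 2 one_le_two)
      obtain ⟨t, ht1, rfl⟩ := hjall (lam + 1) hlam1 c (lt_trans ha1 hc.1) hc0
      exact lt_of_le_of_lt (hbmono le_rfl ht1) hc.2
  | succ n hn ih =>
    obtain ⟨ih1, ih2⟩ := ih
    constructor
    · -- a (n+1) < b (n+1)
      obtain ⟨c, hc, hc0⟩ := bessel_aux_rolle_v hv (hbpos n hn)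
        (hbstrict hn (Nat.lt_succ_self n)) (hbzero n hn) (hbzero (n+1) (le_trans hn (Nat.le_succ n)))
      obtain ⟨t, ht1, rfl⟩ := hjall lam hlam c (lt_trans (hbpos n hn) hc.1) hc0
      have htn : n + 1 ≤ t := by
        by_contra hcon
        push_neg at hcon
        have : a t ≤ a n := hamono ht1 (Nat.lt_succ_iff.mp hcon)
        have : a t < b n := lt_of_le_of_lt this ih1
        exact absurd hc.1 (not_lt.mpr this.le)
      exact lt_of_le_of_lt (hamono (le_trans hn (Nat.le_succ n)) htn) hc.2
    · -- b (n+1) < a (n+2)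
      obtain ⟨c, hc, hc0⟩ := bessel_aux_rolle_u hu (hapos (n+1) (le_trans hn (Nat.le_succ n)))
        (hastrict (le_trans hn (Nat.le_succ n)) (Nat.lt_succ_self (n+1)))
        (hazero (n+1) (le_trans hn (Nat.le_succ n)))
        (hazero (n+2) (by omega))
      obtain ⟨t, ht1, rfl⟩ := hjall (lam + 1) hlam1 c
        (lt_trans (hapos (n+1) (le_trans hn (Nat.le_succ n))) hc.1) hc0
      have htn : n + 1 ≤ t := by
        by_contra hcon
        push_neg at hcon
        have h1 : b t ≤ b n := hbmono ht1 (Nat.lt_succ_iff.mp hcon)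
        have h2 : b t < a (n+1) := lt_of_le_of_lt h1 ih2
        exact absurd hc.1 (not_lt.mpr h2.le)
      exact lt_of_le_of_lt (hbmono (le_trans hn (Nat.le_succ n)) htn) hc.2
end
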